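/- Let A, B, X be bounded operators on a complex Hilbert space H with A, B positive, let 0 ≤ α ≤ 1, r ≥ 2, and set r₀ = min{α, 1-α}. Then for every unit vector k ∈ H, |⟨A^α X B^(1-α) k, k⟩|^r ≤ ‖X‖^r · (⟨(α A^r + (1-α) B^r) k, k⟩ − r₀·(⟨A^r k, k⟩^(1/2) − ⟨B^r k, k⟩^(1/2))²). -/

import Mathlib

/-
By Cauchy–Schwarz, `‖⟪A^α X B^(1-α) k, k⟫‖ ≤ ‖X‖ ‖A^α k‖ ‖B^(1-α) k‖`, and
`‖A^α k‖² = ⟪A^(2α) k, k⟫`. McCarthy's inequality `⟪T^θ k, k⟫ ≤ ⟪T^p k, k⟫^(θ/p)` for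
`0 ≤ θ ≤ p` and a unit vector `k` is Jensen's inequality for the state `⟪· k, k⟫` and the concave
map `t ↦ t^(θ/p)`: each tangent line of that map dominates it on the spectrum, so by the
functional calculus it dominates it as operators. With `r ≥ 2` it bounds `‖A^α k‖^r` by
`⟪A^r k, k⟫^α` and `‖B^(1-α) k‖^r` by `⟪B^r k, k⟫^(1-α)`, and the Kittaneh–Manasrah refinement
of Young's inequality for these two numbers finishes the proof.
-/

open scoped InnerProductSpace
open ContinuousLinearMap Complex

variable {H : Type*} [NormedAddCommGroup H] [InnerProductSpace ℂ H] [CompleteSpace H]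

/-- `T ^ e` for a (positive) operator `T`, via the continuous functional calculus. -/
noncomputable def opow (T : H →L[ℂ] H) (e : ℝ) : H →L[ℂ] H :=
  cfc (fun t : ℝ => t ^ e) T

namespace Real

lemma rpow_le_tangent_line {μ c s : ℝ} (hμ0 : 0 ≤ μ) (hμ1 : μ ≤ 1) (hc : 0 < c) (hs : 0 ≤ s) :
    s ^ μ ≤ μ * c ^ (μ - 1) * s + (1 - μ) * c ^ μ := by
  have hmean : s ^ μ * c ^ (1 - μ) ≤ μ * s + (1 - μ) * c :=
    geom_mean_le_arith_mean2_weighted hμ0 (by linarith) hs hc.le (by ring)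
  have hcancel : c ^ (1 - μ) * c ^ (μ - 1) = 1 := by
    rw [← rpow_add hc]; norm_num
  have hc_pow : c * c ^ (μ - 1) = c ^ μ := by
    rw [rpow_sub_one hc.ne']; field_simp
  calc s ^ μ = s ^ μ * c ^ (1 - μ) * c ^ (μ - 1) := by rw [mul_assoc, hcancel, mul_one]
    _ ≤ (μ * s + (1 - μ) * c) * c ^ (μ - 1) := by gcongr
    _ = μ * c ^ (μ - 1) * s + (1 - μ) * c ^ μ := by rw [← hc_pow]; ring

lemma le_rpow_of_forall_le_tangent_line {x a μ : ℝ} (ha : 0 ≤ a) (hμ0 : 0 ≤ μ)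
    (h : ∀ c, 0 < c → x ≤ μ * c ^ (μ - 1) * a + (1 - μ) * c ^ μ) : x ≤ a ^ μ := by
  obtain rfl | ha := ha.eq_or_lt
  -- at `a = 0` only the limit of the tangent lines at `c → 0⁺` gives the bound
  · have hlim : Filter.Tendsto (fun c : ℝ => (1 - μ) * c ^ μ) (nhdsWithin 0 (Set.Ioi 0))
        (nhds ((1 - μ) * 0 ^ μ)) :=
      ((continuousAt_rpow_const 0 μ (Or.inr hμ0)).const_mul _).tendsto.mono_left
        nhdsWithin_le_nhds
    have hx : x ≤ (1 - μ) * 0 ^ μ :=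
      ge_of_tendsto hlim (eventually_nhdsWithin_of_forall fun c hc => by simpa using h c hc)
    nlinarith [rpow_nonneg le_rfl μ]
  · simpa [mul_assoc, ← rpow_add_one ha.ne', ← add_mul] using h a ha

lemma geom_mean_le_arith_mean_sub_sq_sqrt_of_two_mul_le_one {a b α : ℝ} (ha : 0 ≤ a) (hb : 0 ≤ b)
    (hα0 : 0 ≤ α) (hα : 2 * α ≤ 1) :
    a ^ α * b ^ (1 - α) ≤ α * a + (1 - α) * b - α * (√a - √b) ^ 2 := by
  have hsplit : a ^ α * b ^ (1 - α) = (√a * √b) ^ (2 * α) * b ^ (1 - 2 * α) := by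
    rw [mul_rpow (sqrt_nonneg a) (sqrt_nonneg b), sqrt_eq_rpow, sqrt_eq_rpow,
      ← rpow_mul ha, ← rpow_mul hb, mul_assoc, ← rpow_add_of_nonneg hb (by positivity)
        (by linarith)]
    ring_nf
  have hmean : (√a * √b) ^ (2 * α) * b ^ (1 - 2 * α) ≤ 2 * α * (√a * √b) + (1 - 2 * α) * b :=
    geom_mean_le_arith_mean2_weighted (by linarith) (by linarith) (by positivity) hb (by ring)
  have hsq : (√a - √b) ^ 2 = a + b - 2 * (√a * √b) := by
    rw [sub_sq, sq_sqrt ha, sq_sqrt hb]; ring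
  rw [hsplit, hsq]
  linarith

lemma geom_mean_le_arith_mean_sub_sq_sqrt {a b α : ℝ} (ha : 0 ≤ a) (hb : 0 ≤ b)
    (hα0 : 0 ≤ α) (hα1 : α ≤ 1) :
    a ^ α * b ^ (1 - α) ≤ α * a + (1 - α) * b - min α (1 - α) * (√a - √b) ^ 2 := by
  rcases le_total (2 * α) 1 with hα | hα
  · rw [min_eq_left (by linarith)]
    exact geom_mean_le_arith_mean_sub_sq_sqrt_of_two_mul_le_one ha hb hα0 hα
  · rw [min_eq_right (by linarith)]
    have h := geom_mean_le_arith_mean_sub_sq_sqrt_of_two_mul_le_one hb ha (α := 1 - α)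
      (by linarith) (by linarith)
    rw [sub_sub_cancel, mul_comm, ← neg_sub (√a), neg_sq] at h
    linarith

end Real

section InnerProduct

variable {𝕜 E : Type*} [RCLike 𝕜] [NormedAddCommGroup E] [InnerProductSpace 𝕜 E]

open RCLike in
lemma ContinuousLinearMap.re_inner_le_re_inner_of_le {S T : E →L[𝕜] E} (h : S ≤ T) (x : E) :
    re ⟪S x, x⟫_𝕜 ≤ re ⟪T x, x⟫_𝕜 := by
  have := (h : (T - S).IsPositive).re_inner_nonneg_left x
  simpa [inner_sub_left] using this

lemma ContinuousLinearMap.norm_inner_mul_mul_apply_self_le [CompleteSpace E] {P : E →L[𝕜] E}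
    (hP : IsSelfAdjoint P) (X Q : E →L[𝕜] E) (x : E) :
    ‖⟪(P * X * Q) x, x⟫_𝕜‖ ≤ ‖X‖ * (‖P x‖ * ‖Q x‖) :=
  calc ‖⟪(P * X * Q) x, x⟫_𝕜‖ = ‖⟪X (Q x), P x⟫_𝕜‖ :=
        congrArg norm (hP.isSymmetric _ _)
    _ ≤ ‖X (Q x)‖ * ‖P x‖ := norm_inner_le_norm _ _
    _ ≤ ‖X‖ * ‖Q x‖ * ‖P x‖ := by gcongr; exact X.le_opNorm _
    _ = ‖X‖ * (‖P x‖ * ‖Q x‖) := by ring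

end InnerProduct

section opow

variable {A : H →L[ℂ] H}

lemma isSelfAdjoint_opow (A : H →L[ℂ] H) (e : ℝ) : IsSelfAdjoint (opow A e) :=
  cfc_predicate _ A

lemma opow_nonneg (hA : 0 ≤ A) (e : ℝ) : 0 ≤ opow A e :=
  cfc_nonneg fun _ hx => Real.rpow_nonneg (spectrum_nonneg_of_nonneg hA hx) e

lemma re_inner_opow_apply_self_nonneg (hA : 0 ≤ A) (e : ℝ) (x : H) :
    0 ≤ (⟪opow A e x, x⟫_ℂ).re :=
  ((nonneg_iff_isPositive _).mp (opow_nonneg hA e)).re_inner_nonneg_left x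

lemma opow_add (hA : 0 ≤ A) {e₁ e₂ : ℝ} (he₁ : 0 ≤ e₁) (he₂ : 0 ≤ e₂) :
    opow A (e₁ + e₂) = opow A e₁ * opow A e₂ := by
  rw [opow, opow, opow, ← cfc_mul _ _ A (Real.continuous_rpow_const he₁).continuousOn
    (Real.continuous_rpow_const he₂).continuousOn]
  exact cfc_congr fun x hx => Real.rpow_add_of_nonneg
    (spectrum_nonneg_of_nonneg hA hx) he₁ he₂

lemma re_inner_opow_two_mul_apply_self (hA : 0 ≤ A) {e : ℝ} (he : 0 ≤ e) (x : H) :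
    (⟪opow A (2 * e) x, x⟫_ℂ).re = ‖opow A e x‖ ^ 2 := by
  rw [two_mul, opow_add hA he he, apply_norm_sq_eq_inner_adjoint_left,
    (isSelfAdjoint_opow A e).adjoint_eq]
  rfl

lemma opow_mul_le_tangent_line (hA : 0 ≤ A) {p μ c : ℝ} (hp : 0 ≤ p) (hμ0 : 0 ≤ μ) (hμ1 : μ ≤ 1)
    (hc : 0 < c) :
    opow A (p * μ) ≤ (μ * c ^ (μ - 1)) • opow A p + ((1 - μ) * c ^ μ) • (1 : H →L[ℂ] H) := by
  have hcont : ContinuousOn (fun t : ℝ => t ^ p) (spectrum ℝ A) :=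
    (Real.continuous_rpow_const hp).continuousOn
  have hrhs : (μ * c ^ (μ - 1)) • opow A p + ((1 - μ) * c ^ μ) • (1 : H →L[ℂ] H) =
      cfc (fun t : ℝ => μ * c ^ (μ - 1) * t ^ p + (1 - μ) * c ^ μ) A := by
    rw [cfc_add A (fun t : ℝ => μ * c ^ (μ - 1) * t ^ p) (fun _ => (1 - μ) * c ^ μ)
        (continuousOn_const.mul hcont), cfc_const_mul _ _ A hcont, cfc_const _ A,
      Algebra.algebraMap_eq_smul_one, opow]
  rw [hrhs, opow]
  refine cfc_mono (fun t ht => ?_) (Real.continuous_rpow_const (by positivity)).continuousOn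
  have ht0 : 0 ≤ t := spectrum_nonneg_of_nonneg hA ht
  rw [Real.rpow_mul ht0]
  exact Real.rpow_le_tangent_line hμ0 hμ1 hc (Real.rpow_nonneg ht0 p)

lemma re_inner_opow_le_rpow (hA : 0 ≤ A) {θ p : ℝ} (hθ : 0 ≤ θ) (hθp : θ ≤ p) {x : H}
    (hx : ‖x‖ = 1) :
    (⟪opow A θ x, x⟫_ℂ).re ≤ (⟪opow A p x, x⟫_ℂ).re ^ (θ / p) := by
  have hp : 0 ≤ p := hθ.trans hθp
  have hθ_eq : θ = p * (θ / p) := by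
    rcases eq_or_ne p 0 with rfl | hp0
    · simp only [zero_mul]; linarith
    · field_simp
  refine Real.le_rpow_of_forall_le_tangent_line (re_inner_opow_apply_self_nonneg hA p x)
    (div_nonneg hθ hp) fun c hc => ?_
  have hle := ContinuousLinearMap.re_inner_le_re_inner_of_le
    (opow_mul_le_tangent_line hA hp (div_nonneg hθ hp) (div_le_one_of_le₀ hθp hp) hc) x
  rw [← hθ_eq] at hle
  simp only [RCLike.re_to_complex, add_apply, smul_apply, one_apply_eq_self, inner_add_left,
    add_re, RCLike.real_smul_eq_coe_smul (K := ℂ), inner_smul_left] at hle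
  simpa [inner_self_eq_norm_sq_to_K, hx, mul_comm] using hle

lemma norm_opow_apply_rpow_le (hA : 0 ≤ A) {e r : ℝ} (he : 0 ≤ e) (her : 2 * e ≤ r) {x : H}
    (hx : ‖x‖ = 1) :
    ‖opow A e x‖ ^ r ≤ (⟪opow A r x, x⟫_ℂ).re ^ e := by
  have hexp : 2 * e / r * (r / 2) = e := by
    rcases eq_or_ne r 0 with rfl | hr
    · simp only [zero_div, mul_zero]; linarith
    · field_simp
  calc ‖opow A e x‖ ^ r = (‖opow A e x‖ ^ 2) ^ (r / 2) := by
        rw [← Real.rpow_natCast, ← Real.rpow_mul (norm_nonneg _), Nat.cast_ofNat,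
          mul_div_cancel₀ _ two_ne_zero]
    _ = (⟪opow A (2 * e) x, x⟫_ℂ).re ^ (r / 2) := by
        rw [re_inner_opow_two_mul_apply_self hA he]
    _ ≤ ((⟪opow A r x, x⟫_ℂ).re ^ (2 * e / r)) ^ (r / 2) := by
        gcongr
        · exact re_inner_opow_apply_self_nonneg hA _ x
        · linarith
        · exact re_inner_opow_le_rpow hA (by positivity) her hx
    _ = (⟪opow A r x, x⟫_ℂ).re ^ e := by
        rw [← Real.rpow_mul (re_inner_opow_apply_self_nonneg hA r x), hexp]

end opow

theorem berezin_pointwise_refined (A B X : H →L[ℂ] H)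
    (hA : A.IsPositive) (hB : B.IsPositive) (α r : ℝ)
    (hα0 : 0 ≤ α) (hα1 : α ≤ 1) (hr : 2 ≤ r) (k : H) (hk : ‖k‖ = 1) :
    ‖⟪(opow A α * X * opow B (1 - α)) k, k⟫_ℂ‖ ^ r ≤
      ‖X‖ ^ r *
        ((⟪(α • opow A r + (1 - α) • opow B r) k, k⟫_ℂ).re -
          min α (1 - α) *
            (Real.sqrt (⟪opow A r k, k⟫_ℂ).re - Real.sqrt (⟪opow B r k, k⟫_ℂ).re) ^ 2) := by
  rw [← nonneg_iff_isPositive] at hA hB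
  set a := (⟪opow A r k, k⟫_ℂ).re
  set b := (⟪opow B r k, k⟫_ℂ).re
  have hA_factor : ‖opow A α k‖ ^ r ≤ a ^ α :=
    norm_opow_apply_rpow_le hA hα0 (by linarith) hk
  have hB_factor : ‖opow B (1 - α) k‖ ^ r ≤ b ^ (1 - α) :=
    norm_opow_apply_rpow_le hB (by linarith) (by linarith) hk
  have ha : 0 ≤ a := re_inner_opow_apply_self_nonneg hA r k
  have hb : 0 ≤ b := re_inner_opow_apply_self_nonneg hB r k
  have hyoung := Real.geom_mean_le_arith_mean_sub_sq_sqrt ha hb hα0 hα1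
  calc ‖⟪(opow A α * X * opow B (1 - α)) k, k⟫_ℂ‖ ^ r
      ≤ (‖X‖ * (‖opow A α k‖ * ‖opow B (1 - α) k‖)) ^ r := by
        gcongr
        exact norm_inner_mul_mul_apply_self_le (isSelfAdjoint_opow A α) X _ k
    _ = ‖X‖ ^ r * (‖opow A α k‖ ^ r * ‖opow B (1 - α) k‖ ^ r) := by
        rw [Real.mul_rpow (by positivity) (by positivity), Real.mul_rpow (by positivity)
          (by positivity)]
    _ ≤ ‖X‖ ^ r * (α * a + (1 - α) * b - min α (1 - α) * (√a - √b) ^ 2) := by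
        gcongr
        exact (mul_le_mul hA_factor hB_factor (by positivity) (Real.rpow_nonneg ha α)).trans
          hyoung
    _ = _ := by simp [a, b]
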